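/- For the comprehensive prominence doctrine with initial values v(t_x) = v(¬t_x) = 0 for all x ∈ I, an option x ∈ I is a comprehensive prominence winner, i.e., v*(t_x) ≥ v*(¬t_x) for the upper revised valuation v*, if and only if x minimizes v*(¬t_x), i.e., v*(¬t_x) ≤ v*(¬t_y) for all y ∈ I. -/

import Mathlib

/-- A valuation for prominence doctrines: degrees of belief for the literals
`t_x` ("x is prominent"), `¬t_x`, and `p_{xy}` ("x is preferable to y", for
distinct `x, y`), under the identification `¬p_{xy} = p_{yx}`. -/
structure PVal (I : Type*) where
  t : I → ℝ
  nt : I → ℝ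
  p : I → I → ℝ

/-- Max over a (possibly empty) index set of reals: the empty max is `0`
(note `Real.sSup_empty = 0`). -/
noncomputable def sup0 (S : Set ℝ) : ℝ := sSup S

open Classical in
/-- Min over a (possibly empty) index set of reals: the empty min is `1`. -/
noncomputable def inf1 (S : Set ℝ) : ℝ := if S.Nonempty then sInf S else 1

/-- The one-step revision operator associated with the comprehensive prominence
doctrine, whose clauses are indexed by (nonempty) subsets `X ⊆ I`:
`⋁_{r ∈ X} t_r ∨ ⋁_{r ∈ X, s ∉ X} p_{sr}`, `¬t_y ∨ ⋁_{r ∈ X, s ∉ X} p_{sr}`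
for `y ∉ X`, and `¬t_x ∨ ¬t_y`; the min over an empty index set is `1` and
the max over an empty index set is `0`. -/
noncomputable def Tcp {I : Type*} (v : PVal I) : PVal I where
  t := fun x => max (v.t x)
    (sup0 {a : ℝ | ∃ X : Finset I, x ∈ X ∧
      a = min (inf1 {b : ℝ | ∃ r ∈ X, r ≠ x ∧ b = v.nt r})
              (inf1 {b : ℝ | ∃ r ∈ X, ∃ s, s ∉ X ∧ b = v.p r s})})
  nt := fun y => max (v.nt y)
    (max (sup0 {a : ℝ | ∃ r, r ≠ y ∧ a = v.t r})
         (sup0 {a : ℝ | ∃ X : Finset I, X.Nonempty ∧ y ∉ X ∧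
           a = inf1 {b : ℝ | ∃ r ∈ X, ∃ s, s ∉ X ∧ b = v.p r s}}))
  p := fun u w => max (v.p u w)
    (sup0 {a : ℝ | ∃ X : Finset I, w ∈ X ∧ u ∉ X ∧
      a = min (max (inf1 {b : ℝ | ∃ r ∈ X, b = v.nt r})
                   (sup0 {b : ℝ | ∃ s, s ∉ X ∧ b = v.t s}))
              (inf1 {b : ℝ | ∃ r ∈ X, ∃ s, s ∉ X ∧ ¬(r = w ∧ s = u) ∧
                b = v.p r s})})

/-! Taking `X = I` in the revision of `t_x` bounds `t_x` below by the least `¬t_r` over the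
other options, capped at `1` (the empty min over `r ∈ I, s ∉ I`); the clause `¬t_x ∨ ¬t_y`
bounds `¬t_y` below by `t_x` for `y ≠ x`. At a fixed point these two bounds give both
directions, and the cap is harmless because revision keeps every value `≤ 1`. -/

lemma sup0_le {S : Set ℝ} {c : ℝ} (hc : 0 ≤ c) (h : ∀ a ∈ S, a ≤ c) : sup0 S ≤ c :=
  Real.sSup_le h hc

lemma le_sup0 {S : Set ℝ} {a : ℝ} (hS : S.Finite) (ha : a ∈ S) : a ≤ sup0 S :=
  le_csSup hS.bddAbove ha

lemma inf1_le_one {S : Set ℝ} (h : ∀ b ∈ S, b ≤ 1) : inf1 S ≤ 1 := by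
  unfold inf1
  split_ifs with hS
  · obtain ⟨b, hb⟩ := hS
    by_cases hbdd : BddBelow S
    · exact (csInf_le hbdd hb).trans (h b hb)
    · rw [Real.sInf_of_not_bddBelow hbdd]
      exact zero_le_one
  · exact le_rfl

lemma le_inf1 {S : Set ℝ} {c : ℝ} (hc : c ≤ 1) (h : ∀ b ∈ S, c ≤ b) : c ≤ inf1 S := by
  unfold inf1
  split_ifs with hS
  · exact le_csInf hS h
  · exact hc

lemma Function.isFixedPt_of_iterate_eventually_eq {α : Type*} {f : α → α} {a b : α} {N : ℕ}
    (h : ∀ n ≥ N, f^[n] a = b) : Function.IsFixedPt f b := by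
  have hsucc := h (N + 1) N.le_succ
  rwa [Function.iterate_succ_apply', h N le_rfl] at hsucc

namespace PVal

variable {I : Type*}

def LeOne (w : PVal I) : Prop :=
  (∀ x, w.t x ≤ 1) ∧ (∀ x, w.nt x ≤ 1) ∧ ∀ x y : I, x ≠ y → w.p x y ≤ 1

lemma LeOne.tcp {w : PVal I} (h : w.LeOne) : (Tcp w).LeOne := by
  obtain ⟨ht, hnt, hp⟩ := h
  refine ⟨fun x => ?_, fun y => ?_, fun u w' huw => ?_⟩
  · refine max_le (ht x) (sup0_le zero_le_one ?_)
    rintro _ ⟨X, -, rfl⟩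
    refine (min_le_left _ _).trans (inf1_le_one ?_)
    rintro _ ⟨r, -, -, rfl⟩
    exact hnt r
  · refine max_le (hnt y) (max_le (sup0_le zero_le_one ?_) (sup0_le zero_le_one ?_))
    · rintro _ ⟨r, -, rfl⟩
      exact ht r
    · rintro _ ⟨X, -, -, rfl⟩
      refine inf1_le_one ?_
      rintro _ ⟨r, hr, s, hs, rfl⟩
      exact hp r s (ne_of_mem_of_not_mem hr hs)
  · refine max_le (hp u w' huw) (sup0_le zero_le_one ?_)
    rintro _ ⟨X, -, -, rfl⟩
    refine (min_le_left _ _).trans (max_le (inf1_le_one ?_) (sup0_le zero_le_one ?_))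
    · rintro _ ⟨r, -, rfl⟩
      exact hnt r
    · rintro _ ⟨s, -, rfl⟩
      exact ht s

lemma LeOne.iterate_tcp {w : PVal I} (h : w.LeOne) (n : ℕ) : (Tcp^[n] w).LeOne :=
  Function.Iterate.rec LeOne h (fun _ => LeOne.tcp) n

lemma t_le_tcp_nt [Finite I] (w : PVal I) {x y : I} (hxy : x ≠ y) : w.t x ≤ (Tcp w).nt y := by
  have hfin : {a : ℝ | ∃ r, r ≠ y ∧ a = w.t r}.Finite :=
    (Set.finite_range w.t).subset (by rintro _ ⟨r, -, rfl⟩; exact ⟨r, rfl⟩)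
  exact (le_sup0 hfin ⟨x, hxy, rfl⟩).trans (le_max_of_le_right (le_max_left _ _))

lemma le_tcp_t_of_forall_le_nt [Fintype I] (w : PVal I) (x : I) {c : ℝ} (hc : c ≤ 1)
    (h : ∀ r, r ≠ x → c ≤ w.nt r) : c ≤ (Tcp w).t x := by
  set f : Finset I → ℝ := fun X => min (inf1 {b | ∃ r ∈ X, r ≠ x ∧ b = w.nt r})
    (inf1 {b | ∃ r ∈ X, ∃ s, s ∉ X ∧ b = w.p r s})
  have hfin : {a : ℝ | ∃ X : Finset I, x ∈ X ∧ a = f X}.Finite :=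
    (Set.finite_range f).subset (by rintro _ ⟨X, -, rfl⟩; exact ⟨X, rfl⟩)
  have hc_le : c ≤ f Finset.univ := by
    refine le_min (le_inf1 hc ?_) (le_inf1 hc ?_)
    · rintro _ ⟨r, -, hrx, rfl⟩
      exact h r hrx
    · rintro _ ⟨-, -, s, hs, -⟩
      exact absurd (Finset.mem_univ s) hs
  exact hc_le.trans ((le_sup0 hfin ⟨_, Finset.mem_univ x, rfl⟩).trans (le_max_right _ _))

theorem nt_le_t_iff_of_isFixedPt [Fintype I] {w : PVal I} (hfix : Function.IsFixedPt Tcp w)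
    (hw : w.LeOne) (x : I) : w.nt x ≤ w.t x ↔ ∀ y, w.nt x ≤ w.nt y := by
  constructor
  · intro hwin y
    rcases eq_or_ne x y with rfl | hxy
    · exact le_rfl
    · have hty := t_le_tcp_nt w hxy
      rw [hfix.eq] at hty
      exact hwin.trans hty
  · intro hmin
    have hnt_t := le_tcp_t_of_forall_le_nt w x (hw.2.1 x) fun r _ => hmin r
    rwa [hfix.eq] at hnt_t

end PVal

theorem stmt15_general {I : Type*} [Fintype I]
    (v : PVal I)
    (hbox : ∀ x y : I, x ≠ y → v.p x y ∈ Set.Icc (0:ℝ) 1)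
    (ht : ∀ x, v.t x = 0) (hnt : ∀ x, v.nt x = 0)
    (vstar : PVal I) (hstar : ∃ N : ℕ, ∀ n ≥ N, Tcp^[n] v = vstar)
    (x : I) :
    vstar.nt x ≤ vstar.t x ↔ ∀ y : I, vstar.nt x ≤ vstar.nt y := by
  obtain ⟨N, hN⟩ := hstar
  have hv : v.LeOne :=
    ⟨fun z => (ht z).trans_le zero_le_one, fun z => (hnt z).trans_le zero_le_one,
      fun a b hab => (hbox a b hab).2⟩
  have hstar_le : vstar.LeOne := hN N le_rfl ▸ hv.iterate_tcp N
  exact PVal.nt_le_t_iff_of_isFixedPt (Function.isFixedPt_of_iterate_eventually_eq hN) hstar_le x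

/-- An option `x` is a comprehensive prominence winner (i.e. `t_x` is not
rejected by the upper revised valuation) iff it minimizes `v*(¬t_x)`. -/
theorem stmt15 {I : Type*} [Fintype I] [DecidableEq I]
    (hcard : 2 ≤ Fintype.card I)
    (v : PVal I)
    (hbox : ∀ x y : I, x ≠ y → v.p x y ∈ Set.Icc (0:ℝ) 1)
    (ht : ∀ x, v.t x = 0) (hnt : ∀ x, v.nt x = 0)
    (vstar : PVal I) (hstar : ∃ N : ℕ, ∀ n ≥ N, Tcp^[n] v = vstar)
    (x : I) :
    vstar.nt x ≤ vstar.t x ↔ ∀ y : I, vstar.nt x ≤ vstar.nt y :=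
  stmt15_general v hbox ht hnt vstar hstar x
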